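/- Let k=2^n and π_n the bit-reversal permutation. Then 4k·∑_{j=0}^{k−1} saw(j/k)·saw(π_n(j)/k) = (k·log₂k)/2 − k + 1, i.e. equals nk/2 − k + 1. -/

import Mathlib

open Classical in
/-- The saw-tooth function `saw x = x - ⌊x⌋ - 1/2 + δ(x)/2`, where `δ(x) = 1` iff `x ∈ ℤ`. -/
noncomputable def saw (x : ℝ) : ℝ :=
  x - Int.floor x - 1/2 + (if ∃ m : ℤ, (m : ℝ) = x then (1:ℝ)/2 else 0)

/-- The bit-reversal permutation on `n` bits: reverses the binary digits of `j`. -/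
def bitrev (n j : ℕ) : ℕ := ∑ i ∈ Finset.range n, (j / 2 ^ i % 2) * 2 ^ (n - 1 - i)

/-!
On `[0, 1)` the saw-tooth is `x - 1/2` except at `0`, where it vanishes, and `π_n(j) = 0` only
for `j = 0`. So, up to the correction `k` from `j = 0`, the sum is `S_n / k` for the centred
sum `S_n = ∑ (2j - 2^n)(2π_n(j) - 2^n)`. Splitting `j = 2q + b` with
`π_{n+1}(2q + b) = b 2^n + π_n(q)` gives `S_{n+1} = 4 S_n - 2^{n+1} + 2^{2n+1}`,
hence `S_n = n 4^n / 2 + 2^n`.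
-/

theorem Finset.sum_range_two_mul {M : Type*} [AddCommMonoid M] (m : ℕ) (f : ℕ → M) :
    ∑ j ∈ Finset.range (2 * m), f j = ∑ q ∈ Finset.range m, (f (2 * q) + f (2 * q + 1)) := by
  induction m with
  | zero => simp
  | succ m ih =>
    rw [Nat.mul_succ, Finset.sum_range_succ, Finset.sum_range_succ, ih, Finset.sum_range_succ,
      add_assoc]

theorem saw_of_mem_Ico {x : ℝ} (hx : x ∈ Set.Ico 0 1) :
    saw x = if x = 0 then 0 else x - 1 / 2 := by
  have hx_int : (∃ m : ℤ, (m : ℝ) = x) ↔ x = 0 := by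
    refine ⟨fun ⟨m, hm⟩ => ?_, fun h => ⟨0, by simp [h]⟩⟩
    have : m = 0 := by
      rw [← hm] at hx
      obtain ⟨h0, h1⟩ := hx
      have : (0 : ℤ) ≤ m := by exact_mod_cast h0
      have : m < 1 := by exact_mod_cast h1
      omega
    simp [← hm, this]
  rw [saw, Int.floor_eq_zero_iff.mpr hx]
  split_ifs <;> simp_all

theorem saw_natCast_div {j k : ℕ} (hj : j < k) :
    saw ((j : ℝ) / k) = if j = 0 then 0 else (2 * j - k : ℝ) / (2 * k) := by
  have hk : (0 : ℝ) < k := by exact_mod_cast (Nat.zero_le j).trans_lt hj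
  have hmem : (j : ℝ) / k ∈ Set.Ico 0 1 :=
    ⟨by positivity, (div_lt_one hk).mpr (by exact_mod_cast hj)⟩
  rw [saw_of_mem_Ico hmem]
  simp only [div_eq_zero_iff, Nat.cast_eq_zero, hk.ne', or_false]
  split_ifs
  · rfl
  · field_simp

theorem bitrev_succ_two_mul_add (n q : ℕ) {b : ℕ} (hb : b < 2) :
    bitrev (n + 1) (2 * q + b) = b * 2 ^ n + bitrev n q := by
  rw [bitrev, Finset.sum_range_succ', add_comm]
  congr 1
  · simp [Nat.mod_eq_of_lt hb]
  · refine Finset.sum_congr rfl fun i _ => ?_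
    rw [pow_succ', ← Nat.div_div_eq_div_mul, Nat.mul_add_div two_pos, Nat.div_eq_of_lt hb,
      add_zero, show n + 1 - 1 - (i + 1) = n - 1 - i by omega]

theorem bitrev_succ_two_mul (n q : ℕ) : bitrev (n + 1) (2 * q) = bitrev n q := by
  simpa using bitrev_succ_two_mul_add n q (b := 0) two_pos

theorem bitrev_succ_two_mul_add_one (n q : ℕ) :
    bitrev (n + 1) (2 * q + 1) = 2 ^ n + bitrev n q := by
  simpa using bitrev_succ_two_mul_add n q one_lt_two

theorem bitrev_lt_two_pow (n j : ℕ) : bitrev n j < 2 ^ n := by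
  induction n generalizing j with
  | zero => simp [bitrev]
  | succ n ih =>
    rw [← Nat.div_add_mod j 2, bitrev_succ_two_mul_add n _ (Nat.mod_lt j two_pos), pow_succ]
    have := ih (j / 2)
    have := Nat.mod_lt j two_pos
    interval_cases j % 2 <;> omega

theorem bitrev_eq_zero_iff {n j : ℕ} (hj : j < 2 ^ n) : bitrev n j = 0 ↔ j = 0 := by
  induction n generalizing j with
  | zero => simp_all [bitrev]
  | succ n ih =>
    have hq : j / 2 < 2 ^ n := by rw [pow_succ] at hj; omega
    rw [← Nat.div_add_mod j 2, bitrev_succ_two_mul_add n _ (Nat.mod_lt j two_pos)]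
    have := ih hq
    have := Nat.mod_lt j two_pos
    have := Nat.two_pow_pos n
    interval_cases j % 2 <;> omega

theorem sum_two_mul_bitrev_sub (n : ℕ) :
    ∑ j ∈ Finset.range (2 ^ n), (2 * bitrev n j - 2 ^ n : ℝ) = -2 ^ n := by
  induction n with
  | zero => simp [bitrev]
  | succ n ih =>
    have hpair (q : ℕ) : (2 * bitrev (n + 1) (2 * q) - 2 ^ (n + 1) : ℝ)
        + (2 * bitrev (n + 1) (2 * q + 1) - 2 ^ (n + 1)) = 2 * (2 * bitrev n q - 2 ^ n) := by
      rw [bitrev_succ_two_mul, bitrev_succ_two_mul_add_one]; push_cast; ring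
    rw [Nat.pow_succ', Finset.sum_range_two_mul]
    simp only [hpair, ← Finset.mul_sum, ih]
    ring

theorem sum_two_mul_sub_mul_two_mul_bitrev_sub (n : ℕ) :
    ∑ j ∈ Finset.range (2 ^ n), (2 * j - 2 ^ n : ℝ) * (2 * bitrev n j - 2 ^ n)
      = n * (2 ^ n) ^ 2 / 2 + 2 ^ n := by
  induction n with
  | zero => simp [bitrev]
  | succ n ih =>
    have hpair (q : ℕ) :
        (2 * ((2 * q : ℕ) : ℝ) - 2 ^ (n + 1)) * (2 * bitrev (n + 1) (2 * q) - 2 ^ (n + 1))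
          + (2 * ((2 * q + 1 : ℕ) : ℝ) - 2 ^ (n + 1))
            * (2 * bitrev (n + 1) (2 * q + 1) - 2 ^ (n + 1))
        = 4 * ((2 * q - 2 ^ n) * (2 * bitrev n q - 2 ^ n)) + 2 * (2 * bitrev n q - 2 ^ n)
          + 2 * 2 ^ n := by
      rw [bitrev_succ_two_mul, bitrev_succ_two_mul_add_one]; push_cast; ring
    rw [Nat.pow_succ', Finset.sum_range_two_mul]
    simp only [hpair, Finset.sum_add_distrib, ← Finset.mul_sum, ih,
      sum_two_mul_bitrev_sub, Finset.sum_const, Finset.card_range, nsmul_eq_mul]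
    push_cast
    ring

theorem saw_prod_sum_bitrev (n k : ℕ) (hk : k = 2 ^ n) :
    4 * (k : ℝ) * ∑ j ∈ Finset.range k,
        saw ((j : ℝ) / (k : ℝ)) * saw ((bitrev n j : ℝ) / (k : ℝ))
      = (k : ℝ) * (n : ℝ) / 2 - (k : ℝ) + 1 := by
  subst hk
  have hterm (j : ℕ) (hj : j ∈ Finset.range (2 ^ n)) :
      saw ((j : ℝ) / (2 ^ n : ℕ)) * saw ((bitrev n j : ℝ) / (2 ^ n : ℕ))
        = (2 * j - 2 ^ n : ℝ) * (2 * bitrev n j - 2 ^ n) / (4 * (2 ^ n) ^ 2)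
          - if j = 0 then 1 / 4 else 0 := by
    have hj := Finset.mem_range.mp hj
    simp only [saw_natCast_div hj, saw_natCast_div (bitrev_lt_two_pow n j),
      bitrev_eq_zero_iff hj]
    split_ifs with h0
    · subst h0
      rw [(bitrev_eq_zero_iff hj).mpr rfl]
      field_simp
      ring
    · push_cast
      field_simp
      ring
  rw [Finset.sum_congr rfl hterm, Finset.sum_sub_distrib, ← Finset.sum_div,
    sum_two_mul_sub_mul_two_mul_bitrev_sub, Finset.sum_ite_eq' _ 0,
    if_pos (Finset.mem_range.mpr (Nat.two_pow_pos n))]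
  push_cast
  field_simp
  ring
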